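/- Let G be a connected graph on n vertices with m > n²/4 edges. Then Mo(G)² ≤ m²(n−2)² − m²(n−2)(4m−n²)/n, where Mo(G) = ∑_{e=(u,v)∈E}|n_e(u) − n_e(v)|. -/

import Mathlib

/-- The number of vertices strictly closer to `u` than to `v`. -/
noncomputable def closerCount {V : Type*} (G : SimpleGraph V) (u v : V) : ℕ :=
  ({w | G.dist w u < G.dist w v} : Set V).ncard

/-- The Mostar index of a graph. -/
noncomputable def mostar {V : Type*} [Fintype V] [DecidableEq V]
    (G : SimpleGraph V) [DecidableRel G.Adj] : ℝ :=
  ∑ e ∈ G.edgeFinset,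
    Sym2.lift ⟨fun u v => |(closerCount G u v : ℝ) - (closerCount G v u : ℝ)|,
      fun u v => abs_sub_comm _ _⟩ e

/-!
For an edge `uv` with `n_u`, `n_v` vertices strictly closer to `u`, resp. `v`, the closer sets and
the common neighbourhood of `u` and `v` are disjoint, `n_u, n_v ≥ 1`, and
`|N(u) ∩ N(v)| ≥ d_u + d_v - n`; hence `|n_u - n_v| ≤ 2n - 2 - d_u - d_v`. Summing over the edges,
`∑_{uv} (d_u + d_v) = ∑_v d_v²` and Cauchy–Schwarz `∑_v d_v² ≥ 4m²/n` give
`Mo ≤ D := m(2n - 2) - 4m²/n`. When `4m > n²` also `D ≤ m(n - 2)`, so `Mo² ≤ m(n - 2) D`,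
which is the claimed bound.
-/

open Finset SimpleGraph

section

variable {V : Type*} [Fintype V]

lemma closerCount_eq_card_filter (G : SimpleGraph V) (u v : V) :
    closerCount G u v = #{w | G.dist w u < G.dist w v} := by
  rw [closerCount, ← Set.ncard_coe_finset, coe_filter_univ]

lemma one_le_closerCount_of_adj (G : SimpleGraph V) {u v : V} (h : G.Adj u v) :
    1 ≤ closerCount G u v := by
  rw [closerCount_eq_card_filter, Nat.one_le_iff_ne_zero, ← pos_iff_ne_zero, card_pos]
  exact ⟨u, by simp [dist_eq_one_iff_adj.2 h]⟩

lemma closerCount_add_closerCount_add_card_inter_le [DecidableEq V] (G : SimpleGraph V)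
    [DecidableRel G.Adj] (u v : V) :
    closerCount G u v + closerCount G v u + #(G.neighborFinset u ∩ G.neighborFinset v)
      ≤ Fintype.card V := by
  set A : Finset V := {w | G.dist w u < G.dist w v}
  set B : Finset V := {w | G.dist w v < G.dist w u}
  have hAB : Disjoint A B := disjoint_filter.2 fun w _ h h' => (h.trans h').false
  have hABC : Disjoint (A ∪ B) (G.neighborFinset u ∩ G.neighborFinset v) := by
    refine disjoint_left.2 fun w hw hwC => ?_
    simp only [mem_inter, mem_neighborFinset] at hwC
    simp only [A, B, mem_union, mem_filter_univ, dist_eq_one_iff_adj.2 hwC.1.symm,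
      dist_eq_one_iff_adj.2 hwC.2.symm, lt_irrefl, or_self] at hw
  rw [closerCount_eq_card_filter, closerCount_eq_card_filter, ← card_union_of_disjoint hAB,
    ← card_union_of_disjoint hABC]
  exact card_le_univ _

lemma degree_add_degree_le_card_inter_add_card [DecidableEq V] (G : SimpleGraph V)
    [DecidableRel G.Adj] (u v : V) :
    G.degree u + G.degree v ≤ #(G.neighborFinset u ∩ G.neighborFinset v) + Fintype.card V := by
  rw [← card_neighborFinset_eq_degree, ← card_neighborFinset_eq_degree,
    ← card_inter_add_card_union]
  exact Nat.add_le_add_left (card_le_univ _) _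

lemma abs_closerCount_sub_closerCount_le [DecidableEq V] (G : SimpleGraph V)
    [DecidableRel G.Adj] {u v : V} (h : G.Adj u v) :
    |(closerCount G u v : ℝ) - closerCount G v u| ≤
      2 * Fintype.card V - 2 - G.degree u - G.degree v := by
  have hu : (1 : ℝ) ≤ closerCount G u v := mod_cast one_le_closerCount_of_adj G h
  have hv : (1 : ℝ) ≤ closerCount G v u := mod_cast one_le_closerCount_of_adj G h.symm
  have hdisj : (closerCount G u v + closerCount G v u +
      #(G.neighborFinset u ∩ G.neighborFinset v) : ℝ) ≤ Fintype.card V :=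
    mod_cast closerCount_add_closerCount_add_card_inter_le G u v
  have hdeg : (G.degree u + G.degree v : ℝ) ≤
      #(G.neighborFinset u ∩ G.neighborFinset v) + Fintype.card V :=
    mod_cast degree_add_degree_le_card_inter_add_card G u v
  rw [abs_le]
  constructor <;> linarith

lemma sum_edgeFinset_lift_add {M : Type*} [AddCommMonoid M] [DecidableEq V]
    (G : SimpleGraph V) [DecidableRel G.Adj] (f : V → M) :
    ∑ e ∈ G.edgeFinset, Sym2.lift ⟨fun u v => f u + f v, fun _ _ => add_comm _ _⟩ e =
      ∑ v, G.degree v • f v := by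
  have hedge : ∀ e ∈ G.edgeFinset,
      Sym2.lift ⟨fun u v => f u + f v, fun _ _ => add_comm _ _⟩ e = ∑ w ∈ e.toFinset, f w := by
    intro e he
    induction e with
    | _ u v => rw [Sym2.lift_mk, Sym2.toFinset_mk_eq, sum_pair (G.ne_of_adj (by simpa using he))]
  rw [sum_congr rfl hedge,
    sum_comm' (t' := univ) (s' := fun w => G.incidenceFinset w) fun e w => by
      simp [incidenceSet, and_comm]]
  simp only [sum_const, card_incidenceFinset_eq_degree]

lemma mostar_nonneg [DecidableEq V] (G : SimpleGraph V) [DecidableRel G.Adj] :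
    0 ≤ mostar G :=
  sum_nonneg fun e _ => by
    induction e with
    | _ u v => exact abs_nonneg _

lemma mostar_le_sub_sum_sq_degree [DecidableEq V] (G : SimpleGraph V) [DecidableRel G.Adj] :
    mostar G ≤ #G.edgeFinset * (2 * Fintype.card V - 2) - ∑ v, (G.degree v : ℝ) ^ 2 := by
  calc mostar G ≤ ∑ e ∈ G.edgeFinset, ((2 * Fintype.card V - 2 : ℝ) -
        Sym2.lift ⟨fun u v => (G.degree u : ℝ) + G.degree v, fun _ _ => add_comm _ _⟩ e) :=
        sum_le_sum fun e he => by
          induction e with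
          | _ u v =>
            rw [Sym2.lift_mk, Sym2.lift_mk, sub_add_eq_sub_sub]
            exact abs_closerCount_sub_closerCount_le G (by simpa using he)
    _ = _ := by
        rw [sum_sub_distrib, sum_edgeFinset_lift_add, sum_const, nsmul_eq_mul]
        simp only [nsmul_eq_mul, sq]

lemma mostar_le [DecidableEq V] (G : SimpleGraph V) [DecidableRel G.Adj] :
    mostar G ≤ #G.edgeFinset * (2 * Fintype.card V - 2) -
      4 * (#G.edgeFinset : ℝ) ^ 2 / Fintype.card V := by
  have hsum : ∑ v, (G.degree v : ℝ) = 2 * #G.edgeFinset :=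
    mod_cast G.sum_degrees_eq_twice_card_edges
  have hcs : (2 * #G.edgeFinset : ℝ) ^ 2 ≤ Fintype.card V * ∑ v, (G.degree v : ℝ) ^ 2 := by
    simpa [hsum] using sq_sum_le_card_mul_sum_sq (s := univ) (f := fun v => (G.degree v : ℝ))
  have hsq : 4 * (#G.edgeFinset : ℝ) ^ 2 / Fintype.card V ≤ ∑ v, (G.degree v : ℝ) ^ 2 :=
    div_le_of_le_mul₀ (by positivity) (by positivity) (by linarith)
  linarith [mostar_le_sub_sum_sq_degree G]

end

theorem stmt19_general {V : Type*} [Fintype V] [DecidableEq V] (G : SimpleGraph V)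
    [DecidableRel G.Adj]
    (hm : (Fintype.card V : ℝ) ^ 2 / 4 < G.edgeFinset.card) :
    mostar G ^ 2 ≤
      (G.edgeFinset.card : ℝ) ^ 2 * ((Fintype.card V : ℝ) - 2) ^ 2 -
        (G.edgeFinset.card : ℝ) ^ 2 * ((Fintype.card V : ℝ) - 2) *
          (4 * G.edgeFinset.card - (Fintype.card V : ℝ) ^ 2) /
            Fintype.card V := by
  set n : ℝ := (Fintype.card V : ℝ)
  set m : ℝ := (#G.edgeFinset : ℝ)
  have hm0 : 0 < m := lt_of_le_of_lt (by positivity) hm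
  have hn0 : 0 < n := by
    obtain ⟨e, -⟩ := card_pos.1 (Nat.cast_pos.1 hm0)
    exact Nat.cast_pos.2 (Fintype.card_pos_iff.2 ⟨e.out.1⟩)
  have hMo := mostar_le G
  have hMo' : mostar G ≤ m * (n - 2) := by
    have : m * n ≤ 4 * m ^ 2 / n := by rw [le_div_iff₀ hn0]; nlinarith
    linarith
  calc mostar G ^ 2 = mostar G * mostar G := sq _
    _ ≤ m * (n - 2) * (m * (2 * n - 2) - 4 * m ^ 2 / n) :=
        mul_le_mul hMo' hMo (mostar_nonneg G) ((mostar_nonneg G).trans hMo')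
    _ = _ := by field_simp; ring

theorem stmt19 {V : Type*} [Fintype V] [DecidableEq V] (G : SimpleGraph V)
    [DecidableRel G.Adj] (hG : G.Connected)
    (hm : (Fintype.card V : ℝ) ^ 2 / 4 < G.edgeFinset.card) :
    mostar G ^ 2 ≤
      (G.edgeFinset.card : ℝ) ^ 2 * ((Fintype.card V : ℝ) - 2) ^ 2 -
        (G.edgeFinset.card : ℝ) ^ 2 * ((Fintype.card V : ℝ) - 2) *
          (4 * G.edgeFinset.card - (Fintype.card V : ℝ) ^ 2) /
            Fintype.card V :=
  stmt19_general G hm
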